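/- arXiv:2007.01093 — 2 statements merged into one kernel-verified Lean document; each statement's English description precedes it below -/
import Mathlib

section
/- Let α > 0 and p > 1/α, and consider the kernel k(r) = r^{−1/α} (log(1/r))^{−p} for r ∈ (0,1). Then for every u ∈ (0,1): (a) ∫_0^u |k(r)|^α dr = (pα − 1)^{−1} (log(1/u))^{1 − pα} < ∞, so k ∈ L^α([0,u]); and (b) for every ζ > 0, lim_{u → 0^+} u^{−ζ} ∫_0^u |k(r)|^α dr = +∞, i.e. the kernel satisfies the local non-determinism condition with every exponent ζ > 0. -/
/-!
With `q = pα > 1`, the integrand `|k(r)|^α` equals `r⁻¹ (log (1/r))^{-q}`, which is the derivative of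
`(q - 1)⁻¹ (log (1/r))^{1-q}`; this antiderivative tends to `0` as `r → 0⁺`, which gives (a).
For (b), with `t = log (1/u) → ∞` the product `u^{-ζ} ∫_0^u |k|^α` is a constant times
`exp (ζ t) / t^{q-1}`, and exponentials beat powers.
-/

open Real MeasureTheory Filter Set Topology

lemma log_one_div_pos {r : ℝ} (hr : r ∈ Ioo (0 : ℝ) 1) : 0 < log (1 / r) :=
  log_pos (one_lt_one_div hr.1 hr.2)

lemma tendsto_log_one_div_nhdsGT_zero :
    Tendsto (fun r : ℝ => log (1 / r)) (𝓝[>] 0) atTop := by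
  simp_rw [one_div, log_inv]
  exact tendsto_neg_atBot_atTop.comp tendsto_log_nhdsGT_zero

lemma hasDerivAt_log_one_div {r : ℝ} (hr : r ≠ 0) :
    HasDerivAt (fun x : ℝ => log (1 / x)) (-r⁻¹) r := by
  simp_rw [one_div, log_inv]
  exact (hasDerivAt_log hr).neg

section LogKernel

variable {q : ℝ}

noncomputable def logKernelPrimitive (q r : ℝ) : ℝ := (q - 1)⁻¹ * log (1 / r) ^ (1 - q)

lemma hasDerivAt_logKernelPrimitive (hq : q ≠ 1) {r : ℝ} (hr : r ∈ Ioo (0 : ℝ) 1) :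
    HasDerivAt (logKernelPrimitive q) (r⁻¹ * log (1 / r) ^ (-q)) r := by
  have hlog := log_one_div_pos hr
  refine (((hasDerivAt_log_one_div hr.1.ne').rpow_const (p := 1 - q)
    (Or.inl hlog.ne')).const_mul (q - 1)⁻¹).congr_deriv ?_
  rw [show 1 - q - 1 = -q by ring]
  field_simp [sub_ne_zero.mpr hq]
  ring

lemma tendsto_logKernelPrimitive_nhdsGT_zero (hq : 1 < q) :
    Tendsto (logKernelPrimitive q) (𝓝[>] 0) (𝓝 0) := by
  have hpow : Tendsto (fun t : ℝ => t ^ (1 - q)) atTop (𝓝 0) := by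
    simpa using tendsto_rpow_neg_atTop (y := q - 1) (by linarith)
  have h := (hpow.comp tendsto_log_one_div_nhdsGT_zero).const_mul (q - 1)⁻¹
  rw [mul_zero] at h
  exact h

-- `log (1 / 0) = 0` and `0 ^ (1 - q) = 0`, so the junk value at `0` is the right-hand limit.
lemma continuousOn_logKernelPrimitive (hq : 1 < q) {u : ℝ} (hu : u < 1) :
    ContinuousOn (logKernelPrimitive q) (Icc 0 u) := by
  rintro r ⟨hr0, hru⟩
  rcases hr0.eq_or_lt with rfl | hr0
  · have hzero : logKernelPrimitive q 0 = 0 := by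
      simp [logKernelPrimitive, zero_rpow (by linarith : 1 - q ≠ 0)]
    have h : ContinuousWithinAt (logKernelPrimitive q) (Ioi 0) 0 := by
      rw [ContinuousWithinAt, hzero]
      exact tendsto_logKernelPrimitive_nhdsGT_zero hq
    exact (continuousWithinAt_Ioi_iff_Ici.mp h).mono Icc_subset_Ici_self
  · exact (hasDerivAt_logKernelPrimitive hq.ne' ⟨hr0, hru.trans_lt hu⟩).continuousAt
      |>.continuousWithinAt

lemma integrableOn_inv_mul_log_one_div_rpow (hq : 1 < q) {u : ℝ} (hu : u < 1) :
    IntegrableOn (fun r => r⁻¹ * log (1 / r) ^ (-q)) (Ioc 0 u) :=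
  intervalIntegral.integrableOn_deriv_of_nonneg (continuousOn_logKernelPrimitive hq hu)
    (fun _ hr => hasDerivAt_logKernelPrimitive hq.ne' ⟨hr.1, hr.2.trans hu⟩)
    fun _ hr => mul_nonneg (inv_nonneg.mpr hr.1.le)
      (rpow_nonneg (log_one_div_pos ⟨hr.1, hr.2.trans hu⟩).le _)

lemma integral_inv_mul_log_one_div_rpow (hq : 1 < q) {u : ℝ} (hu : u ∈ Ioo (0 : ℝ) 1) :
    ∫ r in Ioc 0 u, r⁻¹ * log (1 / r) ^ (-q) = (q - 1)⁻¹ * log (1 / u) ^ (1 - q) := by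
  rw [← intervalIntegral.integral_of_le hu.1.le,
    intervalIntegral.integral_eq_sub_of_hasDerivAt_of_le hu.1.le
      (continuousOn_logKernelPrimitive hq hu.2)
      (fun r hr => hasDerivAt_logKernelPrimitive hq.ne' ⟨hr.1, hr.2.trans hu.2⟩)
      ((intervalIntegrable_iff_integrableOn_Ioc_of_le hu.1.le).mpr
        (integrableOn_inv_mul_log_one_div_rpow hq hu.2))]
  simp [logKernelPrimitive, zero_rpow (by linarith : 1 - q ≠ 0)]

end LogKernel

lemma abs_rpow_mul_log_one_div_rpow_rpow {α p r : ℝ} (hα : α ≠ 0) (hr : r ∈ Ioo (0 : ℝ) 1) :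
    |r ^ (-(1 / α)) * log (1 / r) ^ (-p)| ^ α = r⁻¹ * log (1 / r) ^ (-(p * α)) := by
  have hlog := log_one_div_pos hr
  have hr0 := hr.1
  rw [abs_of_nonneg (by positivity), mul_rpow (by positivity) (by positivity),
    ← rpow_mul hr.1.le, ← rpow_mul hlog.le, show -(1 / α) * α = -1 by field_simp, rpow_neg_one,
    neg_mul]

lemma tendsto_rpow_neg_mul_log_one_div_rpow_atTop {ζ : ℝ} (hζ : 0 < ζ) (s : ℝ) :
    Tendsto (fun u : ℝ => u ^ (-ζ) * log (1 / u) ^ (-s)) (𝓝[>] 0) atTop := by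
  refine ((tendsto_exp_mul_div_rpow_atTop s ζ hζ).comp tendsto_log_one_div_nhdsGT_zero).congr'
    ?_
  filter_upwards [Ioo_mem_nhdsGT one_pos] with u hu
  rw [Function.comp_apply, rpow_neg (log_one_div_pos hu).le, rpow_def_of_pos hu.1, one_div,
    log_inv, div_eq_mul_inv]
  congr 2
  ring

/-- For `α > 0`, `p > 1/α` and the kernel `k(r) = r^{−1/α}(log(1/r))^{−p}` on `(0,1)`:
(a) for every `u ∈ (0,1)`, `k ∈ L^α([0,u])` with
`∫_0^u |k(r)|^α dr = (pα−1)^{−1}(log(1/u))^{1−pα}`; and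
(b) for every `ζ > 0`, `u^{−ζ} ∫_0^u |k(r)|^α dr → +∞` as `u → 0⁺`, i.e. the kernel
satisfies the local non-determinism condition with every exponent `ζ > 0`. -/
theorem stmt_7 (α p : ℝ) (hα : 0 < α) (hp : 1 / α < p) :
    (∀ u : ℝ, u ∈ Set.Ioo (0 : ℝ) 1 →
        IntegrableOn (fun r => |r ^ (-(1 / α)) * (Real.log (1 / r)) ^ (-p)| ^ α)
          (Set.Ioo 0 u) ∧
        ∫ r in Set.Ioo 0 u, |r ^ (-(1 / α)) * (Real.log (1 / r)) ^ (-p)| ^ α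
          = (p * α - 1)⁻¹ * (Real.log (1 / u)) ^ (1 - p * α)) ∧
    (∀ ζ : ℝ, 0 < ζ →
        Tendsto
          (fun u : ℝ =>
            u ^ (-ζ) * ∫ r in Set.Ioo 0 u, |r ^ (-(1 / α)) * (Real.log (1 / r)) ^ (-p)| ^ α)
          (nhdsWithin 0 (Set.Ioi 0)) atTop) := by
  have hq : 1 < p * α := (div_lt_iff₀ hα).mp hp
  have hkernel : EqOn (fun r => |r ^ (-(1 / α)) * log (1 / r) ^ (-p)| ^ α)
      (fun r => r⁻¹ * log (1 / r) ^ (-(p * α))) (Ioo 0 1) :=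
    fun r hr => abs_rpow_mul_log_one_div_rpow_rpow hα.ne' hr
  have hpartA : ∀ u ∈ Ioo (0 : ℝ) 1,
      IntegrableOn (fun r => |r ^ (-(1 / α)) * log (1 / r) ^ (-p)| ^ α) (Ioo 0 u) ∧
      ∫ r in Ioo 0 u, |r ^ (-(1 / α)) * log (1 / r) ^ (-p)| ^ α
        = (p * α - 1)⁻¹ * log (1 / u) ^ (1 - p * α) := by
    intro u hu
    have hsub : EqOn _ _ (Ioo 0 u) := hkernel.mono (Ioo_subset_Ioo_right hu.2.le)
    refine ⟨((integrableOn_inv_mul_log_one_div_rpow hq hu.2).mono_set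
      Ioo_subset_Ioc_self).congr_fun hsub.symm measurableSet_Ioo, ?_⟩
    rw [setIntegral_congr_fun measurableSet_Ioo hsub, ← integral_Ioc_eq_integral_Ioo]
    exact integral_inv_mul_log_one_div_rpow hq hu
  refine ⟨hpartA, fun ζ hζ => ?_⟩
  refine ((tendsto_rpow_neg_mul_log_one_div_rpow_atTop hζ (p * α - 1)).const_mul_atTop
    (inv_pos.mpr (sub_pos.mpr hq))).congr' ?_
  filter_upwards [Ioo_mem_nhdsGT one_pos] with u hu
  rw [(hpartA u hu).2, show 1 - p * α = -(p * α - 1) by ring]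
  ring
end

section
/- Let T > 0, γ, η ∈ (0,1) with γ + η > 1, and C, M ≥ 0. Let Γ : [0,T] × ℝ^d → ℝ^d satisfy, writing Γ_{s,t}(x) := Γ(t,x) − Γ(s,x): (i) |Γ_{s,t}(x)| ≤ C (t−s)^γ and (ii) |Γ_{s,t}(x) − Γ_{s,t}(y)| ≤ C |x−y| (t−s)^γ for all 0 ≤ s ≤ t ≤ T and x, y ∈ ℝ^d. Let y : [0,T] → ℝ^d be η-Hölder with |y_t − y_s| ≤ M (t−s)^η. Then there exists a constant K, depending only on γ + η, and a unique function I : [0,T] → ℝ^d with I_0 = 0 such that for all 0 ≤ s ≤ t ≤ T, |I_t − I_s − Γ_{s,t}(y_s)| ≤ K C M (t−s)^{γ+η}; moreover I is γ-Hölder continuous. (I_t is the nonlinear Young integral ∫_0^t Γ_{dr}(y_r), the limit of the Riemann sums ∑_{[u,v]∈𝒫} Γ_{u,v}(y_u) as the mesh of the partition 𝒫 of [0,t] tends to 0.) -/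
/-!
The germ `A s t = Γ t (y s) - Γ s (y s)` has defect
`A s t - A s u - A u t = Γ_{u,t}(y s) - Γ_{u,t}(y u)` of size `C M (t - s)^θ` with `θ = γ + η > 1`.
Refining a uniform partition of `[a, b]` with `q` pieces into `q (m + 1)` pieces therefore moves
the Riemann sum by at most `m C M (b - a)^θ q^(1 - θ)`, so along partitions into `(k + 1)!`
pieces the Riemann sums converge, uniformly on `0 ≤ a ≤ b ≤ T`, to a limit within
`K C M (b - a)^θ` of `A a b`. Every `m` eventually divides `(k + 1)!`, so the limit is additive
at rational splitting points, hence at all points by continuity, and `I t` is the limit on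
`[0, t]`. The difference of two such `I` has increments `O((t - s)^θ)`; telescoping over `n`
equal pieces bounds it by `O(n^(1 - θ))`, so it vanishes.
-/

open Set Filter Finset Topology

noncomputable section

namespace Sewing

variable {E : Type*} [NormedAddCommGroup E]

def gridPoint (a b : ℝ) (n j : ℕ) : ℝ := a + j * (b - a) / n

section Grid

variable {a b : ℝ} {n : ℕ}

@[simp]
lemma gridPoint_zero (a b : ℝ) (n : ℕ) : gridPoint a b n 0 = a := by simp [gridPoint]

lemma gridPoint_self (a b : ℝ) (hn : n ≠ 0) : gridPoint a b n n = b := by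
  rw [gridPoint, mul_div_cancel_left₀ _ (Nat.cast_ne_zero.mpr hn)]
  ring

lemma gridPoint_mono (hab : a ≤ b) (n : ℕ) {i j : ℕ} (hij : i ≤ j) :
    gridPoint a b n i ≤ gridPoint a b n j := by
  unfold gridPoint
  gcongr

lemma le_gridPoint (hab : a ≤ b) (n j : ℕ) : a ≤ gridPoint a b n j := by
  simpa using gridPoint_mono hab n j.zero_le

lemma gridPoint_le (hab : a ≤ b) {j : ℕ} (hj : j ≤ n) (hn : n ≠ 0) :
    gridPoint a b n j ≤ b :=
  (gridPoint_mono hab n hj).trans_eq (gridPoint_self a b hn)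

lemma gridPoint_succ_sub (a b : ℝ) (n j : ℕ) :
    gridPoint a b n (j + 1) - gridPoint a b n j = (b - a) / n := by
  unfold gridPoint
  push_cast
  ring

lemma gridPoint_mul_add (a b : ℝ) {m : ℕ} (hn : n ≠ 0) (hm : m ≠ 0) (i j : ℕ) :
    gridPoint a b (n * m) (i * m + j) =
      gridPoint (gridPoint a b n i) (gridPoint a b n (i + 1)) m j := by
  have : (n : ℝ) ≠ 0 := Nat.cast_ne_zero.mpr hn
  have : (m : ℝ) ≠ 0 := Nat.cast_ne_zero.mpr hm
  unfold gridPoint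
  push_cast
  field_simp
  ring

lemma gridPoint_gridPoint_left (a b : ℝ) {p q : ℕ} (hp : p ≠ 0) (hq : q ≠ 0) (i : ℕ) :
    gridPoint a (gridPoint a b q p) p i = gridPoint a b q i := by
  have : (p : ℝ) ≠ 0 := Nat.cast_ne_zero.mpr hp
  have : (q : ℝ) ≠ 0 := Nat.cast_ne_zero.mpr hq
  unfold gridPoint
  field_simp
  ring

lemma gridPoint_gridPoint_right (a b : ℝ) {p q : ℕ} (hpq : p < q) (i : ℕ) :
    gridPoint (gridPoint a b q p) b (q - p) i = gridPoint a b q (p + i) := by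
  have : (q : ℝ) ≠ 0 := Nat.cast_ne_zero.mpr (by omega)
  have : (q : ℝ) - p ≠ 0 := sub_ne_zero.mpr (by exact_mod_cast hpq.ne')
  unfold gridPoint
  rw [Nat.cast_sub hpq.le]
  push_cast
  field_simp
  ring

lemma tendsto_gridPoint_floor {u : ℝ} (hab : a < b) (hu : u ∈ Icc a b) :
    Tendsto (fun n : ℕ => gridPoint a b n ⌊(u - a) / (b - a) * n⌋₊) atTop (𝓝 u) := by
  have hl : 0 ≤ (u - a) / (b - a) := div_nonneg (sub_nonneg.mpr hu.1) (sub_pos.mpr hab).le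
  have h := ((tendsto_nat_floor_mul_div_atTop hl).comp tendsto_natCast_atTop_atTop).mul_const
    (b - a) |>.const_add a
  convert h using 2 with n
  · simp [gridPoint]
    ring
  · field_simp [(sub_pos.mpr hab).ne']
    ring

end Grid

lemma norm_sum_range_le_of_le_rpow {g : ℕ → E} {n : ℕ} (hn : n ≠ 0) {L c θ : ℝ}
    (hL : 0 ≤ L) (hg : ∀ j < n, ‖g j‖ ≤ c * (L / n) ^ θ) :
    ‖∑ j ∈ range n, g j‖ ≤ c * L ^ θ * (n : ℝ) ^ (1 - θ) := by
  have hn' : (0 : ℝ) < n := Nat.cast_pos.mpr (Nat.pos_of_ne_zero hn)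
  calc ‖∑ j ∈ range n, g j‖ ≤ ∑ j ∈ range n, ‖g j‖ := norm_sum_le _ _
    _ ≤ ∑ _j ∈ range n, c * (L / n) ^ θ := sum_le_sum fun j hj => hg j (mem_range.mp hj)
    _ = c * L ^ θ * (n : ℝ) ^ (1 - θ) := by
      rw [sum_const, card_range, nsmul_eq_mul, Real.div_rpow hL hn'.le, Real.rpow_sub hn',
        Real.rpow_one]
      field_simp

lemma tendsto_rpow_one_sub_atTop {θ : ℝ} (hθ : 1 < θ) :
    Tendsto (fun x : ℝ => x ^ (1 - θ)) atTop (𝓝 0) := by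
  simpa [neg_sub] using tendsto_rpow_neg_atTop (sub_pos.mpr hθ)

lemma continuousOn_Icc_of_norm_sub_le_rpow {F : Type*} [SeminormedAddCommGroup F] {f : ℝ → F}
    {a b M r : ℝ} (hr : 0 < r)
    (hf : ∀ s t, a ≤ s → s ≤ t → t ≤ b → ‖f t - f s‖ ≤ M * (t - s) ^ r) :
    ContinuousOn f (Icc a b) := by
  intro x hx
  have hbound : ∀ t ∈ Icc a b, ‖f t - f x‖ ≤ M * |t - x| ^ r := by
    intro t ht
    rcases le_total x t with h | h
    · rw [abs_of_nonneg (sub_nonneg.mpr h)]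
      exact hf x t hx.1 h ht.2
    · rw [abs_of_nonpos (sub_nonpos.mpr h), neg_sub, norm_sub_rev]
      exact hf t x ht.1 h hx.2
  have hlim : Tendsto (fun t => M * |t - x| ^ r) (𝓝[Icc a b] x) (𝓝 0) := by
    have hcont : Continuous fun t : ℝ => M * |t - x| ^ r :=
      continuous_const.mul ((continuous_abs.comp (continuous_sub_right x)).rpow_const
        fun _ => Or.inr hr.le)
    exact (hcont.tendsto' x 0 (by simp [Real.zero_rpow hr.ne'])).mono_left nhdsWithin_le_nhds
  exact tendsto_iff_norm_sub_tendsto_zero.mpr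
    (squeeze_zero' (.of_forall fun _ => norm_nonneg _)
      (eventually_nhdsWithin_of_forall hbound) hlim)

def riemannSum (A : ℝ → ℝ → E) (n : ℕ) (a b : ℝ) : E :=
  ∑ j ∈ range n, A (gridPoint a b n j) (gridPoint a b n (j + 1))

def triangle (T : ℝ) : Set (ℝ × ℝ) := {p | 0 ≤ p.1 ∧ p.1 ≤ p.2 ∧ p.2 ≤ T}

section RiemannSum

variable (A : ℝ → ℝ → E)

@[simp]
lemma riemannSum_one (a b : ℝ) : riemannSum A 1 a b = A a b := by
  simp [riemannSum, gridPoint_self]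

lemma riemannSum_succ (n : ℕ) (a b : ℝ) :
    riemannSum A (n + 1) a b =
      riemannSum A n a (gridPoint a b (n + 1) n) + A (gridPoint a b (n + 1) n) b := by
  rw [riemannSum, sum_range_succ, gridPoint_self a b n.succ_ne_zero]
  congr 1
  refine sum_congr rfl fun i hi => ?_
  have hn : n ≠ 0 := ne_zero_of_lt (mem_range.mp hi)
  rw [gridPoint_gridPoint_left a b hn n.succ_ne_zero,
    gridPoint_gridPoint_left a b hn n.succ_ne_zero]

lemma riemannSum_mul (n m : ℕ) (a b : ℝ) :
    riemannSum A (n * m) a b =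
      ∑ i ∈ range n, riemannSum A m (gridPoint a b n i) (gridPoint a b n (i + 1)) := by
  have hsplit : ∀ f : ℕ → E,
      ∑ j ∈ range (n * m), f j = ∑ i ∈ range n, ∑ j ∈ range m, f (i * m + j) := by
    intro f
    induction n with
    | zero => simp
    | succ n ih => rw [Nat.succ_mul, sum_range_add, ih, sum_range_succ]
  rw [riemannSum, hsplit]
  refine sum_congr rfl fun i hi => sum_congr rfl fun j hj => ?_
  have hn : n ≠ 0 := ne_zero_of_lt (mem_range.mp hi)
  have hm : m ≠ 0 := ne_zero_of_lt (mem_range.mp hj)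
  rw [← gridPoint_mul_add a b hn hm, ← gridPoint_mul_add a b hn hm, add_assoc]

lemma riemannSum_self {a : ℝ} (ha : A a a = 0) (n : ℕ) : riemannSum A n a a = 0 := by
  simp [riemannSum, gridPoint, ha]

variable {A} {T : ℝ}

lemma continuousOn_riemannSum (hAc : ContinuousOn (fun p : ℝ × ℝ => A p.1 p.2) (triangle T))
    (n : ℕ) : ContinuousOn (fun p : ℝ × ℝ => riemannSum A n p.1 p.2) (triangle T) := by
  refine continuousOn_finsetSum _ fun j hj => hAc.comp (f := fun p : ℝ × ℝ =>
    (gridPoint p.1 p.2 n j, gridPoint p.1 p.2 n (j + 1))) (by unfold gridPoint; fun_prop) ?_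
  rintro p ⟨h0, hp, hT⟩
  have hj : j + 1 ≤ n := mem_range.mp hj
  exact ⟨h0.trans (le_gridPoint hp n j), gridPoint_mono hp n j.le_succ,
    (gridPoint_le hp hj (by omega)).trans hT⟩

end RiemannSum

def HasDefectBound (T θ c : ℝ) (A : ℝ → ℝ → E) : Prop :=
  ∀ s u t, 0 ≤ s → s ≤ u → u ≤ t → t ≤ T → ‖A s t - A s u - A u t‖ ≤ c * (t - s) ^ θ

-- `(k + 1) r^k` with `r = 2^(1 - θ)` bounds the passage from `(k + 1)!` to `(k + 2)!` pieces,
-- because `(k + 1)! ≥ 2^k`.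
def sewingConst (θ : ℝ) : ℝ := ∑' k : ℕ, ((k : ℝ) + 1) * ((2 : ℝ) ^ (1 - θ)) ^ k

lemma summable_sewingConst {θ : ℝ} (hθ : 1 < θ) :
    Summable fun k : ℕ => ((k : ℝ) + 1) * ((2 : ℝ) ^ (1 - θ)) ^ k := by
  have hr : ‖(2 : ℝ) ^ (1 - θ)‖ < 1 := by
    rw [Real.norm_of_nonneg (by positivity)]
    exact Real.rpow_lt_one_of_one_lt_of_neg one_lt_two (by linarith)
  simpa [add_mul] using (summable_pow_mul_geometric_of_norm_lt_one 1 hr).add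
    (summable_geometric_of_norm_lt_one hr)

lemma sewingConst_pos {θ : ℝ} (hθ : 1 < θ) : 0 < sewingConst θ :=
  (summable_sewingConst hθ).tsum_pos (fun k => by positivity) 0 (by simp)

/-- The sewing of `A`: the limit of its Riemann sums along uniform partitions into `(k + 1)!`
pieces, written as a telescoping series. -/
def sewingLimit (A : ℝ → ℝ → E) (s t : ℝ) : E :=
  A s t + ∑' k : ℕ, (riemannSum A (k + 2).factorial s t - riemannSum A (k + 1).factorial s t)

namespace HasDefectBound

variable {T θ c : ℝ} {A : ℝ → ℝ → E} {a b : ℝ}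

lemma apply_self (hA : HasDefectBound T θ c A) (hθ : θ ≠ 0) (ha : 0 ≤ a) (haT : a ≤ T) :
    A a a = 0 := by
  simpa [Real.zero_rpow hθ] using hA a a a ha le_rfl le_rfl haT

lemma norm_riemannSum_sub_le (hA : HasDefectBound T θ c A) (hc : 0 ≤ c) (hθ : 0 ≤ θ)
    (ha : 0 ≤ a) (hab : a ≤ b) (hb : b ≤ T) (m : ℕ) :
    ‖riemannSum A (m + 1) a b - A a b‖ ≤ m * (c * (b - a) ^ θ) := by
  induction m generalizing b with
  | zero => simp
  | succ m ih =>
    set x := gridPoint a b (m + 2) (m + 1)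
    have hax : a ≤ x := le_gridPoint hab _ _
    have hxb : x ≤ b := gridPoint_le hab (by omega) (by omega)
    have hpiece : ‖riemannSum A (m + 1) a x - A a x‖ ≤ m * (c * (b - a) ^ θ) := by
      refine (ih hax (hxb.trans hb)).trans ?_
      gcongr
    calc ‖riemannSum A (m + 1 + 1) a b - A a b‖
        = ‖(riemannSum A (m + 1) a x - A a x) - (A a b - A a x - A x b)‖ := by
          rw [riemannSum_succ]
          congr 1
          abel
      _ ≤ m * (c * (b - a) ^ θ) + c * (b - a) ^ θ :=
          (norm_sub_le _ _).trans (add_le_add hpiece (hA a x b ha hax hxb hb))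
      _ = (m + 1 : ℕ) * (c * (b - a) ^ θ) := by push_cast; ring

lemma norm_riemannSum_mul_sub_le (hA : HasDefectBound T θ c A) (hc : 0 ≤ c) (hθ : 0 ≤ θ)
    (ha : 0 ≤ a) (hab : a ≤ b) (hb : b ≤ T) {q : ℕ} (hq : q ≠ 0) (m : ℕ) :
    ‖riemannSum A (q * (m + 1)) a b - riemannSum A q a b‖ ≤
      m * c * (b - a) ^ θ * (q : ℝ) ^ (1 - θ) := by
  rw [riemannSum_mul, riemannSum, ← sum_sub_distrib]
  refine norm_sum_range_le_of_le_rpow hq (sub_nonneg.mpr hab) fun i hi => ?_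
  have hpiece := hA.norm_riemannSum_sub_le hc hθ (ha.trans (le_gridPoint hab q i))
    (gridPoint_mono hab q i.le_succ) ((gridPoint_le hab hi hq).trans hb) m
  rwa [gridPoint_succ_sub, ← mul_assoc] at hpiece

lemma norm_riemannSum_factorial_succ_sub_le (hA : HasDefectBound T θ c A) (hc : 0 ≤ c)
    (hθ : 1 ≤ θ) (ha : 0 ≤ a) (hab : a ≤ b) (hb : b ≤ T) (k : ℕ) :
    ‖riemannSum A (k + 2).factorial a b - riemannSum A (k + 1).factorial a b‖ ≤
      c * (b - a) ^ θ * (((k : ℝ) + 1) * ((2 : ℝ) ^ (1 - θ)) ^ k) := by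
  have hfac : (k + 2).factorial = (k + 1).factorial * (k + 1 + 1) := by
    rw [Nat.factorial_succ (k + 1), mul_comm]
  have htwo : (2 : ℝ) ^ k ≤ (k + 1).factorial := by
    have h := Nat.factorial_mul_pow_le_factorial (m := 1) (n := k)
    rw [Nat.factorial_one, one_mul, add_comm 1 k] at h
    exact_mod_cast h
  have hpow : ((k + 1).factorial : ℝ) ^ (1 - θ) ≤ ((2 : ℝ) ^ (1 - θ)) ^ k := by
    rw [← Real.rpow_natCast, ← Real.rpow_mul zero_le_two, mul_comm, Real.rpow_mul zero_le_two,
      Real.rpow_natCast]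
    exact Real.rpow_le_rpow_of_nonpos (by positivity) htwo (by linarith)
  rw [hfac]
  refine (hA.norm_riemannSum_mul_sub_le hc (by linarith) ha hab hb
    (Nat.factorial_ne_zero _) (k + 1)).trans ?_
  push_cast
  calc ((k : ℝ) + 1) * c * (b - a) ^ θ * ((k + 1).factorial : ℝ) ^ (1 - θ)
      = c * (b - a) ^ θ * ((k + 1) * ((k + 1).factorial : ℝ) ^ (1 - θ)) := by ring
    _ ≤ _ := by gcongr

lemma norm_sewingLimit_sub_le (hA : HasDefectBound T θ c A) (hc : 0 ≤ c) (hθ : 1 < θ)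
    (ha : 0 ≤ a) (hab : a ≤ b) (hb : b ≤ T) :
    ‖sewingLimit A a b - A a b‖ ≤ sewingConst θ * (c * (b - a) ^ θ) := by
  rw [sewingLimit, add_sub_cancel_left, mul_comm]
  exact tsum_of_norm_bounded ((summable_sewingConst hθ).hasSum.mul_left _)
    (hA.norm_riemannSum_factorial_succ_sub_le hc hθ.le ha hab hb)

lemma sewingLimit_self (hA : HasDefectBound T θ c A) (hθ : θ ≠ 0) (ha : 0 ≤ a) (haT : a ≤ T) :
    sewingLimit A a a = 0 := by
  have h := hA.apply_self hθ ha haT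
  simp [sewingLimit, h, riemannSum_self A h]

section Complete

variable [CompleteSpace E]

lemma summable_riemannSum_factorial_succ_sub (hA : HasDefectBound T θ c A) (hc : 0 ≤ c)
    (hθ : 1 < θ) (ha : 0 ≤ a) (hab : a ≤ b) (hb : b ≤ T) :
    Summable fun k : ℕ =>
      riemannSum A (k + 2).factorial a b - riemannSum A (k + 1).factorial a b :=
  ((summable_sewingConst hθ).mul_left _).of_norm_bounded
    (hA.norm_riemannSum_factorial_succ_sub_le hc hθ.le ha hab hb)

lemma tendsto_riemannSum_factorial (hA : HasDefectBound T θ c A) (hc : 0 ≤ c) (hθ : 1 < θ)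
    (ha : 0 ≤ a) (hab : a ≤ b) (hb : b ≤ T) :
    Tendsto (fun k => riemannSum A (k + 1).factorial a b) atTop (𝓝 (sewingLimit A a b)) := by
  have htel : ∀ n, riemannSum A (n + 1).factorial a b = A a b +
      ∑ k ∈ range n, (riemannSum A (k + 2).factorial a b - riemannSum A (k + 1).factorial a b) :=
    fun n => by
      rw [sum_range_sub (fun k => riemannSum A (k + 1).factorial a b)]
      simp
  exact ((hA.summable_riemannSum_factorial_succ_sub hc hθ ha hab hb).hasSum.tendsto_sum_nat
    |>.const_add _).congr fun n => (htel n).symm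

lemma continuousOn_sewingLimit (hA : HasDefectBound T θ c A) (hc : 0 ≤ c) (hθ : 1 < θ)
    (hAc : ContinuousOn (fun p : ℝ × ℝ => A p.1 p.2) (triangle T)) :
    ContinuousOn (fun p : ℝ × ℝ => sewingLimit A p.1 p.2) (triangle T) := by
  refine hAc.add (continuousOn_tsum (fun k => (continuousOn_riemannSum hAc _).sub
    (continuousOn_riemannSum hAc _)) ((summable_sewingConst hθ).mul_left (c * T ^ θ)) ?_)
  rintro k p ⟨h0, hp, hT⟩
  refine (hA.norm_riemannSum_factorial_succ_sub_le hc hθ.le h0 hp hT k).trans ?_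
  gcongr
  linarith

lemma tendsto_riemannSum_factorial_div (hA : HasDefectBound T θ c A) (hc : 0 ≤ c)
    (hθ : 1 < θ) {m : ℕ} (hm : m ≠ 0) (ha : 0 ≤ a) (hab : a ≤ b) (hb : b ≤ T) :
    Tendsto (fun k => riemannSum A ((k + 1).factorial / m) a b) atTop
      (𝓝 (sewingLimit A a b)) := by
  obtain ⟨m, rfl⟩ := Nat.exists_eq_succ_of_ne_zero hm
  set q : ℕ → ℕ := fun k => (k + 1).factorial / (m + 1)
  have hq : Tendsto q atTop atTop := (Nat.tendsto_div_const_atTop hm).comp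
    (tendsto_atTop_mono (fun k => Nat.self_le_factorial (k + 1)) (tendsto_add_atTop_nat 1))
  have hmul : ∀ᶠ k in atTop, q k * (m + 1) = (k + 1).factorial := by
    filter_upwards [eventually_ge_atTop m] with k hk
    exact Nat.div_mul_cancel (Nat.dvd_factorial m.succ_pos (by omega))
  have hpow : Tendsto (fun k => m * c * (b - a) ^ θ * ((q k : ℕ) : ℝ) ^ (1 - θ)) atTop
      (𝓝 0) := by
    simpa using ((tendsto_rpow_one_sub_atTop hθ).comp
      (tendsto_natCast_atTop_atTop.comp hq)).const_mul (m * c * (b - a) ^ θ)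
  have hrefine : Tendsto (fun k => riemannSum A (q k * (m + 1)) a b - riemannSum A (q k) a b)
      atTop (𝓝 0) := by
    refine squeeze_zero_norm' ?_ hpow
    filter_upwards [hq.eventually_ne_atTop 0] with k hk
    exact hA.norm_riemannSum_mul_sub_le hc (by linarith) ha hab hb hk m
  refine (sub_zero (sewingLimit A a b) ▸
    (hA.tendsto_riemannSum_factorial hc hθ ha hab hb).sub hrefine).congr' ?_
  filter_upwards [hmul] with k hk
  rw [hk, sub_sub_cancel]

lemma sewingLimit_eq_sum (hA : HasDefectBound T θ c A) (hc : 0 ≤ c) (hθ : 1 < θ)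
    {m : ℕ} (hm : m ≠ 0) (ha : 0 ≤ a) (hab : a ≤ b) (hb : b ≤ T) :
    sewingLimit A a b =
      ∑ i ∈ range m, sewingLimit A (gridPoint a b m i) (gridPoint a b m (i + 1)) := by
  refine tendsto_nhds_unique (hA.tendsto_riemannSum_factorial hc hθ ha hab hb) ?_
  have hpieces := tendsto_finsetSum (range m) fun i hi =>
    hA.tendsto_riemannSum_factorial_div hc hθ hm (ha.trans (le_gridPoint hab m i))
      (gridPoint_mono hab m i.le_succ) ((gridPoint_le hab (mem_range.mp hi) hm).trans hb)
  refine hpieces.congr' ?_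
  filter_upwards [eventually_ge_atTop m] with k hk
  rw [← riemannSum_mul,
    Nat.mul_div_cancel' (Nat.dvd_factorial (Nat.pos_of_ne_zero hm) (by omega))]

lemma sewingLimit_add_gridPoint (hA : HasDefectBound T θ c A) (hc : 0 ≤ c) (hθ : 1 < θ)
    {p q : ℕ} (hq : q ≠ 0) (hpq : p ≤ q) (ha : 0 ≤ a) (hab : a ≤ b) (hb : b ≤ T) :
    sewingLimit A a b =
      sewingLimit A a (gridPoint a b q p) + sewingLimit A (gridPoint a b q p) b := by
  set x := gridPoint a b q p
  have hax : a ≤ x := le_gridPoint hab q p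
  have hxb : x ≤ b := gridPoint_le hab hpq hq
  have hleft : sewingLimit A a x =
      ∑ i ∈ range p, sewingLimit A (gridPoint a b q i) (gridPoint a b q (i + 1)) := by
    rcases Nat.eq_zero_or_pos p with rfl | hp
    · simp [x, hA.sewingLimit_self (by positivity) ha (hab.trans hb)]
    · rw [hA.sewingLimit_eq_sum hc hθ hp.ne' ha hax (hxb.trans hb)]
      simp only [x, gridPoint_gridPoint_left a b hp.ne' hq]
  have hright : sewingLimit A x b =
      ∑ i ∈ range (q - p),
        sewingLimit A (gridPoint a b q (p + i)) (gridPoint a b q (p + i + 1)) := by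
    rcases hpq.eq_or_lt with rfl | hpq
    · simp [x, gridPoint_self a b hq, hA.sewingLimit_self (by positivity) (ha.trans hab) hb]
    · rw [hA.sewingLimit_eq_sum hc hθ (m := q - p) (by omega) (ha.trans hax) hxb hb]
      simp only [x, gridPoint_gridPoint_right a b hpq]
      rfl
  have hsplit := sum_range_add
    (fun i => sewingLimit A (gridPoint a b q i) (gridPoint a b q (i + 1))) p (q - p)
  rw [Nat.add_sub_cancel' hpq] at hsplit
  rw [hleft, hright, ← hsplit, hA.sewingLimit_eq_sum hc hθ hq ha hab hb]

lemma sewingLimit_add (hA : HasDefectBound T θ c A) (hc : 0 ≤ c) (hθ : 1 < θ)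
    (hAc : ContinuousOn (fun p : ℝ × ℝ => A p.1 p.2) (triangle T)) {u : ℝ}
    (ha : 0 ≤ a) (hau : a ≤ u) (hub : u ≤ b) (hb : b ≤ T) :
    sewingLimit A a b = sewingLimit A a u + sewingLimit A u b := by
  rcases hau.eq_or_lt with rfl | hau
  · rw [hA.sewingLimit_self (by positivity) ha (hub.trans hb), zero_add]
  have hab : a < b := hau.trans_le hub
  set x : ℕ → ℝ := fun n => gridPoint a b n ⌊(u - a) / (b - a) * n⌋₊
  have hfloor : ∀ n : ℕ, ⌊(u - a) / (b - a) * n⌋₊ ≤ n := fun n => Nat.floor_le_of_le <|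
    mul_le_of_le_one_left n.cast_nonneg <| (div_le_one (sub_pos.mpr hab)).mpr (by linarith)
  have hxmem : ∀ᶠ n in atTop, x n ∈ Icc a b := by
    filter_upwards [eventually_ne_atTop 0] with n hn
    exact ⟨le_gridPoint hab.le n _, gridPoint_le hab.le (hfloor n) hn⟩
  have hφ : ContinuousOn (fun v => sewingLimit A a v + sewingLimit A v b) (Icc a b) := by
    have hcont := hA.continuousOn_sewingLimit hc hθ hAc
    refine (hcont.comp (f := fun v => (a, v)) (by fun_prop) ?_).add
      (hcont.comp (f := fun v => (v, b)) (by fun_prop) ?_)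
    · exact fun v hv => ⟨ha, hv.1, hv.2.trans hb⟩
    · exact fun v hv => ⟨ha.trans hv.1, hv.2, hb⟩
  have hlim := (hφ u ⟨hau.le, hub⟩).tendsto.comp (tendsto_nhdsWithin_iff.mpr
    ⟨tendsto_gridPoint_floor hab ⟨hau.le, hub⟩, hxmem⟩)
  refine tendsto_nhds_unique (tendsto_const_nhds.congr' ?_) hlim
  filter_upwards [eventually_ne_atTop 0] with n hn
  exact hA.sewingLimit_add_gridPoint hc hθ hn (hfloor n) ha hab.le hb

theorem norm_sewingLimit_sub_sub_le (hA : HasDefectBound T θ c A) (hc : 0 ≤ c)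
    (hθ : 1 < θ) (hAc : ContinuousOn (fun p : ℝ × ℝ => A p.1 p.2) (triangle T)) {s t : ℝ}
    (hs : 0 ≤ s) (hst : s ≤ t) (ht : t ≤ T) :
    ‖sewingLimit A 0 t - sewingLimit A 0 s - A s t‖ ≤ sewingConst θ * (c * (t - s) ^ θ) := by
  rw [hA.sewingLimit_add hc hθ hAc le_rfl hs hst ht, add_sub_cancel_left]
  exact hA.norm_sewingLimit_sub_le hc hθ hs hst ht

end Complete

end HasDefectBound

lemma eqOn_of_norm_sub_sub_le {I J : ℝ → E} {A : ℝ → ℝ → E} {T θ k : ℝ} (hθ : 1 < θ)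
    (h0 : I 0 = J 0)
    (hI : ∀ s t, 0 ≤ s → s ≤ t → t ≤ T → ‖I t - I s - A s t‖ ≤ k * (t - s) ^ θ)
    (hJ : ∀ s t, 0 ≤ s → s ≤ t → t ≤ T → ‖J t - J s - A s t‖ ≤ k * (t - s) ^ θ) :
    EqOn I J (Icc 0 T) := by
  rintro t ⟨ht0, htT⟩
  set D := fun v => I v - J v
  have hbound : ∀ n : ℕ, n ≠ 0 → ‖D t‖ ≤ 2 * k * t ^ θ * (n : ℝ) ^ (1 - θ) := by
    intro n hn
    have htel := sum_range_sub (fun j => D (gridPoint 0 t n j)) n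
    rw [gridPoint_self 0 t hn, gridPoint_zero, show D 0 = 0 from sub_eq_zero.mpr h0,
      sub_zero] at htel
    rw [← htel]
    refine norm_sum_range_le_of_le_rpow hn ht0 fun j hj => ?_
    have hx0 := le_gridPoint ht0 n j
    have hxx := gridPoint_mono ht0 n j.le_succ
    have hxT := (gridPoint_le ht0 hj hn).trans htT
    set x := gridPoint 0 t n j
    set x' := gridPoint 0 t n (j + 1)
    calc ‖D x' - D x‖ = ‖(I x' - I x - A x x') - (J x' - J x - A x x')‖ := by
          simp only [D]
          congr 1
          abel
      _ ≤ k * (x' - x) ^ θ + k * (x' - x) ^ θ :=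
          (norm_sub_le _ _).trans (add_le_add (hI x x' hx0 hxx hxT) (hJ x x' hx0 hxx hxT))
      _ = 2 * k * (t / n) ^ θ := by rw [gridPoint_succ_sub, sub_zero]; ring
  refine sub_eq_zero.mp (norm_le_zero_iff.mp (ge_of_tendsto ?_
    ((eventually_ne_atTop 0).mono hbound)))
  simpa using ((tendsto_rpow_one_sub_atTop hθ).comp tendsto_natCast_atTop_atTop).const_mul
    (2 * k * t ^ θ)

lemma norm_sub_le_mul_rpow_of_norm_sub_sub_le {I : ℝ → E} {A : ℝ → ℝ → E}
    {T γ η C k s t : ℝ} (hγ : 0 ≤ γ) (hη : 0 ≤ η) (hk : 0 ≤ k) (hs : 0 ≤ s) (hst : s ≤ t)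
    (ht : t ≤ T) (hA : ‖A s t‖ ≤ C * (t - s) ^ γ)
    (hI : ‖I t - I s - A s t‖ ≤ k * (t - s) ^ (γ + η)) :
    ‖I t - I s‖ ≤ (C + k * T ^ η) * (t - s) ^ γ := by
  have hts : (t - s) ^ η ≤ T ^ η := Real.rpow_le_rpow (by linarith) (by linarith) hη
  rw [Real.rpow_add_of_nonneg (by linarith) hγ hη] at hI
  calc ‖I t - I s‖ ≤ ‖A s t‖ + ‖I t - I s - A s t‖ := norm_le_norm_add_norm_sub' _ _
    _ ≤ C * (t - s) ^ γ + k * ((t - s) ^ γ * T ^ η) := add_le_add hA (hI.trans (by gcongr))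
    _ = (C + k * T ^ η) * (t - s) ^ γ := by ring

section NonlinearYoung

variable {X : Type*} [SeminormedAddCommGroup X] {Γ : ℝ → X → E} {y : ℝ → X}
  {T γ η C M : ℝ}

def nonlinearYoungGerm (Γ : ℝ → X → E) (y : ℝ → X) (s t : ℝ) : E := Γ t (y s) - Γ s (y s)

lemma hasDefectBound_nonlinearYoungGerm (hγ : 0 ≤ γ) (hη : 0 ≤ η) (hC : 0 ≤ C) (hM : 0 ≤ M)
    (hΓ : ∀ s t, 0 ≤ s → s ≤ t → t ≤ T → ∀ x z,
      ‖(Γ t x - Γ s x) - (Γ t z - Γ s z)‖ ≤ C * ‖x - z‖ * (t - s) ^ γ)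
    (hy : ∀ s t, 0 ≤ s → s ≤ t → t ≤ T → ‖y t - y s‖ ≤ M * (t - s) ^ η) :
    HasDefectBound T (γ + η) (C * M) (nonlinearYoungGerm Γ y) := by
  intro s u t hs hsu hut ht
  have hy' : ‖y s - y u‖ ≤ M * (t - s) ^ η := by
    rw [norm_sub_rev]
    refine (hy s u hs hsu (hut.trans ht)).trans ?_
    gcongr
  calc ‖nonlinearYoungGerm Γ y s t - nonlinearYoungGerm Γ y s u - nonlinearYoungGerm Γ y u t‖
      = ‖(Γ t (y s) - Γ u (y s)) - (Γ t (y u) - Γ u (y u))‖ := by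
        simp only [nonlinearYoungGerm]
        congr 1
        abel
    _ ≤ C * ‖y s - y u‖ * (t - u) ^ γ := hΓ u t (hs.trans hsu) hut ht _ _
    _ ≤ C * (M * (t - s) ^ η) * (t - s) ^ γ :=
        mul_le_mul (mul_le_mul_of_nonneg_left hy' hC) (Real.rpow_le_rpow (by linarith)
          (by linarith) hγ) (by positivity) (mul_nonneg hC ((norm_nonneg _).trans hy'))
    _ = C * M * (t - s) ^ (γ + η) := by
        rw [Real.rpow_add_of_nonneg (by linarith) hγ hη]
        ring

lemma continuousOn_nonlinearYoungGerm (hγ : 0 < γ) (hη : 0 < η) (hC : 0 ≤ C)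
    (hΓ₁ : ∀ s t, 0 ≤ s → s ≤ t → t ≤ T → ∀ x, ‖Γ t x - Γ s x‖ ≤ C * (t - s) ^ γ)
    (hΓ₂ : ∀ s t, 0 ≤ s → s ≤ t → t ≤ T → ∀ x z,
      ‖(Γ t x - Γ s x) - (Γ t z - Γ s z)‖ ≤ C * ‖x - z‖ * (t - s) ^ γ)
    (hy : ∀ s t, 0 ≤ s → s ≤ t → t ≤ T → ‖y t - y s‖ ≤ M * (t - s) ^ η) :
    ContinuousOn (fun p : ℝ × ℝ => nonlinearYoungGerm Γ y p.1 p.2) (triangle T) := by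
  -- `Γ` itself need not be continuous in space; its increments from time `0` are.
  set G : X × ℝ → E := fun q => Γ q.2 q.1 - Γ 0 q.1
  have hG : ContinuousOn G (univ ×ˢ Icc 0 T) := by
    refine continuousOn_prod_of_continuousOn_lipschitzOnWith G (C * T ^ γ).toNNReal
      (fun x _ => continuousOn_Icc_of_norm_sub_le_rpow (M := C) hγ fun s t hs hst ht => ?_)
      (fun t ht => (LipschitzWith.of_dist_le_mul fun x z => ?_).lipschitzOnWith)
    · simpa [G] using hΓ₁ s t hs hst ht x
    · have hTγ : t ^ γ ≤ T ^ γ := Real.rpow_le_rpow ht.1 ht.2 hγ.le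
      rw [dist_eq_norm, dist_eq_norm,
        Real.coe_toNNReal _ (mul_nonneg hC (Real.rpow_nonneg (ht.1.trans ht.2) _))]
      calc ‖G (x, t) - G (z, t)‖ ≤ C * ‖x - z‖ * (t - 0) ^ γ :=
            hΓ₂ 0 t le_rfl ht.1 ht.2 x z
        _ ≤ C * T ^ γ * ‖x - z‖ := by
          rw [sub_zero, mul_right_comm]
          gcongr
  have hyc : ContinuousOn y (Icc 0 T) := continuousOn_Icc_of_norm_sub_le_rpow hη hy
  have hcomp : ∀ g : ℝ × ℝ → ℝ, Continuous g → MapsTo g (triangle T) (Icc 0 T) →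
      ContinuousOn (fun p : ℝ × ℝ => G (y p.1, g p)) (triangle T) := fun g hg hgT =>
    hG.comp ((hyc.comp continuousOn_fst fun p hp => ⟨hp.1, hp.2.1.trans hp.2.2⟩).prodMk
      hg.continuousOn) fun p hp => ⟨mem_univ _, hgT hp⟩
  refine ((hcomp Prod.snd continuous_snd fun p hp => ⟨hp.1.trans hp.2.1, hp.2.2⟩).sub
    (hcomp Prod.fst continuous_fst fun p hp => ⟨hp.1, hp.2.1.trans hp.2.2⟩)).congr
    fun p _ => ?_
  simp [G, nonlinearYoungGerm]

end NonlinearYoung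

end Sewing

end

open Sewing in
/-- Nonlinear Young integral (sewing): there is a constant `K` depending only on `θ = γ+η > 1`
such that, whenever `Γ : [0,T] × ℝ^d → ℝ^d` satisfies `|Γ_{s,t}(x)| ≤ C(t−s)^γ` and
`|Γ_{s,t}(x) − Γ_{s,t}(y)| ≤ C|x−y|(t−s)^γ`, and `y` is `η`-Hölder with constant `M`, there
exists a function `I` with `I_0 = 0`, `γ`-Hölder continuous, satisfying
`|I_t − I_s − Γ_{s,t}(y_s)| ≤ K C M (t−s)^{γ+η}`, and `I` is the unique such function on
`[0,T]`. -/
theorem stmt_9 (θ : ℝ) (hθ : 1 < θ) :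
    ∃ K : ℝ, 0 < K ∧
      ∀ (d : ℕ) (T γ η C M : ℝ), 0 < T → γ ∈ Set.Ioo (0 : ℝ) 1 → η ∈ Set.Ioo (0 : ℝ) 1 →
        γ + η = θ → 0 ≤ C → 0 ≤ M →
        ∀ (Γ : ℝ → EuclideanSpace ℝ (Fin d) → EuclideanSpace ℝ (Fin d))
          (y : ℝ → EuclideanSpace ℝ (Fin d)),
        (∀ s t, 0 ≤ s → s ≤ t → t ≤ T → ∀ x, ‖Γ t x - Γ s x‖ ≤ C * (t - s) ^ γ) →
        (∀ s t, 0 ≤ s → s ≤ t → t ≤ T → ∀ x z,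
          ‖(Γ t x - Γ s x) - (Γ t z - Γ s z)‖ ≤ C * ‖x - z‖ * (t - s) ^ γ) →
        (∀ s t, 0 ≤ s → s ≤ t → t ≤ T → ‖y t - y s‖ ≤ M * (t - s) ^ η) →
        ∃ I : ℝ → EuclideanSpace ℝ (Fin d),
          I 0 = 0 ∧
          (∀ s t, 0 ≤ s → s ≤ t → t ≤ T →
            ‖I t - I s - (Γ t (y s) - Γ s (y s))‖ ≤ K * C * M * (t - s) ^ (γ + η)) ∧
          (∃ N : ℝ, ∀ s t, 0 ≤ s → s ≤ t → t ≤ T → ‖I t - I s‖ ≤ N * (t - s) ^ γ) ∧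
          (∀ J : ℝ → EuclideanSpace ℝ (Fin d), J 0 = 0 →
            (∀ s t, 0 ≤ s → s ≤ t → t ≤ T →
              ‖J t - J s - (Γ t (y s) - Γ s (y s))‖ ≤ K * C * M * (t - s) ^ (γ + η)) →
            ∀ t ∈ Set.Icc (0 : ℝ) T, J t = I t) := by
  refine ⟨sewingConst θ, sewingConst_pos hθ, ?_⟩
  rintro d T γ η C M hT ⟨hγ, -⟩ ⟨hη, -⟩ rfl hC hM Γ y hΓ₁ hΓ₂ hy
  set A := nonlinearYoungGerm Γ y
  have hA : HasDefectBound T (γ + η) (C * M) A :=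
    hasDefectBound_nonlinearYoungGerm hγ.le hη.le hC hM hΓ₂ hy
  have hAc := continuousOn_nonlinearYoungGerm hγ hη hC hΓ₁ hΓ₂ hy
  have hI0 : sewingLimit A 0 0 = 0 := hA.sewingLimit_self (by positivity) le_rfl hT.le
  have hI : ∀ s t, 0 ≤ s → s ≤ t → t ≤ T → ‖sewingLimit A 0 t - sewingLimit A 0 s - A s t‖ ≤
      sewingConst (γ + η) * C * M * (t - s) ^ (γ + η) := fun s t hs hst ht => by
    simpa only [mul_assoc] using hA.norm_sewingLimit_sub_sub_le (by positivity) hθ hAc hs hst ht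
  have hK : 0 ≤ sewingConst (γ + η) * C * M := by have := sewingConst_pos hθ; positivity
  refine ⟨sewingLimit A 0, hI0, hI, ⟨C + sewingConst (γ + η) * C * M * T ^ η,
    fun s t hs hst ht => ?_⟩, fun J hJ0 hJ => (eqOn_of_norm_sub_sub_le hθ (hJ0 ▸ hI0) hI hJ).symm⟩
  exact norm_sub_le_mul_rpow_of_norm_sub_sub_le (A := A) hγ.le hη.le hK hs hst ht
    (hΓ₁ s t hs hst ht _) (hI s t hs hst ht)
end
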